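/- arXiv:1212.6897 — 3 statements merged into one kernel-verified Lean document; each statement's English description precedes it below -/
import Mathlib

section
/- Consider the open quadrant Q = {(x, y) ∈ ℝ² : x < 0, y > 0} (the NW quadrant of a neighborhood of the origin). If a region S ⊆ Q is bounded below by the graph of a strictly increasing function through the origin and bounded above by either another strictly increasing graph through the origin or a vertical segment descending from a point, then S cannot contain a full translate of any open quadrant {(x,y) : ±x > 0, ∓y > 0} (an 'active' quadrant) based at the origin. -/
theorem not_nwQuadrant_subset_of_le_graph {S : Set (ℝ × ℝ)} {g : ℝ → ℝ}
    (hS : ∀ p ∈ S, p.2 ≤ g p.1) :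
    ¬ {p : ℝ × ℝ | p.1 < 0 ∧ 0 < p.2} ⊆ S := by
  intro hsub
  set y := max (g (-1)) 0 + 1
  have hy : 0 < y := by positivity
  have hmem : ((-1 : ℝ), y) ∈ S := hsub ⟨by norm_num, hy⟩
  have : y ≤ g (-1) := hS _ hmem
  linarith [le_max_left (g (-1)) 0]

theorem not_seQuadrant_subset_of_subset_nwQuadrant {S : Set (ℝ × ℝ)}
    (hSQ : S ⊆ {p : ℝ × ℝ | p.1 < 0 ∧ 0 < p.2}) :
    ¬ {p : ℝ × ℝ | 0 < p.1 ∧ p.2 < 0} ⊆ S := by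
  intro hsub
  have hmem : ((1 : ℝ), (-1 : ℝ)) ∈ S := hsub ⟨one_pos, by norm_num⟩
  exact absurd (hSQ hmem).1 (by norm_num)

theorem stmt_8_general (S : Set (ℝ × ℝ))
    (hSQ : S ⊆ {p : ℝ × ℝ | p.1 < 0 ∧ 0 < p.2})
    (habove : (∃ g : ℝ → ℝ, StrictMono g ∧ g 0 = 0 ∧ ∀ p ∈ S, p.2 ≤ g p.1) ∨
      (∃ q : ℝ × ℝ, ∀ p ∈ S, p.1 ≤ q.1 ∧ p.2 ≤ q.2)) :
    ¬ ({p : ℝ × ℝ | p.1 < 0 ∧ 0 < p.2} ⊆ S) ∧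
    ¬ ({p : ℝ × ℝ | 0 < p.1 ∧ p.2 < 0} ⊆ S) := by
  refine ⟨?_, not_seQuadrant_subset_of_subset_nwQuadrant hSQ⟩
  rcases habove with ⟨g, -, -, hg⟩ | ⟨q, hq⟩
  · exact not_nwQuadrant_subset_of_le_graph hg
  · exact not_nwQuadrant_subset_of_le_graph (g := fun _ => q.2) fun p hp => (hq p hp).2

/-- Geometric core of Lemma `l_active`: a region `S` inside the NW quadrant
`Q = {x < 0, y > 0}`, bounded below by the graph of a strictly increasing function
through the origin and bounded above either by another strictly increasing graph
through the origin or by a vertical segment descending from a point, cannot contain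
a full open "active" quadrant (NW or SE) based at the origin. -/
theorem stmt_8 (S : Set (ℝ × ℝ)) (f : ℝ → ℝ)
    (hSQ : S ⊆ {p : ℝ × ℝ | p.1 < 0 ∧ 0 < p.2})
    (hf : StrictMono f) (hf0 : f 0 = 0)
    (hbelow : ∀ p ∈ S, f p.1 ≤ p.2)
    (habove : (∃ g : ℝ → ℝ, StrictMono g ∧ g 0 = 0 ∧ ∀ p ∈ S, p.2 ≤ g p.1) ∨
      (∃ q : ℝ × ℝ, ∀ p ∈ S, p.1 ≤ q.1 ∧ p.2 ≤ q.2)) :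
    ¬ ({p : ℝ × ℝ | p.1 < 0 ∧ 0 < p.2} ⊆ S) ∧
    ¬ ({p : ℝ × ℝ | 0 < p.1 ∧ p.2 < 0} ⊆ S) :=
  stmt_8_general S hSQ habove
end

section
/- Let γ ∈ (0, 2π) be the interior angle at a corner point of a planar billiard table. A billiard trajectory hitting the corner admits a unique continuation of the flow for every incoming direction if and only if γ = π/n for some positive integer n; in general there are at most 2 possible continuations. -/
/-!
Both continuations are values of the map `wedgeFold γ`, which folds the unfolded picture
(the line cut by the walls at the multiples of `γ`) back onto the wedge `[0, γ]`:
branch `B` is `wedgeFold γ (π + α)` and branch `A` is `wedgeFold γ (π - α)`. The fold is even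
and `2γ`-periodic, so if `π = nγ` then `wedgeFold γ (π + α) = wedgeFold γ (α - π) =
wedgeFold γ (π - α)`. Otherwise `π` lies strictly inside a single fold interval
`[kγ, (k + 1)γ]`, on which the fold is injective, and any small `α` separates the branches.
-/

open Real

/-- Outgoing direction of the corner series branch that first hits the wall at
angle `γ` (obtained by unfolding the wedge of opening `γ`): the incoming
trajectory comes toward the corner from the direction `α ∈ (0, γ)` inside the
wedge, so the straight continuation has direction angle `α + π`; folding the
unfolded picture back into the wedge gives the outgoing direction. -/
noncomputable def cornerBranchB (γ α : ℝ) : ℝ :=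
  let m : ℤ := ⌊(α + π) / γ⌋
  if Even m then α + π - m * γ else (m + 1) * γ - (α + π)

/-- The other branch (first collision with the wall at angle `0`), obtained from
the first one by the symmetry `α ↦ γ - α` of the wedge. -/
noncomputable def cornerBranchA (γ α : ℝ) : ℝ :=
  γ - cornerBranchB γ (γ - α)

/-- The triangle wave of period `2γ` mapping `ℝ` onto `[0, γ]`. -/
noncomputable def wedgeFold (γ x : ℝ) : ℝ :=
  if Even ⌊x / γ⌋ then x - ⌊x / γ⌋ * γ else (⌊x / γ⌋ + 1) * γ - x

theorem cornerBranchB_eq_wedgeFold (γ α : ℝ) : cornerBranchB γ α = wedgeFold γ (α + π) := rfl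

section wedgeFold

variable {γ : ℝ}

theorem wedgeFold_eq_of_mem_Icc (hγ : 0 < γ) {m : ℤ} {x : ℝ}
    (hx : x ∈ Set.Icc (m * γ) ((m + 1) * γ)) :
    wedgeFold γ x = if Even m then x - m * γ else (m + 1) * γ - x := by
  obtain ⟨hlo, hhi⟩ := hx
  rcases hhi.lt_or_eq with hlt | rfl
  · have hfloor : ⌊x / γ⌋ = m := by
      rw [Int.floor_eq_iff, le_div_iff₀ hγ, div_lt_iff₀ hγ]
      exact ⟨hlo, hlt⟩
    simp only [wedgeFold, hfloor]
  · have hfloor : ⌊((m + 1) * γ) / γ⌋ = m + 1 := by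
      rw [mul_div_cancel_right₀ _ hγ.ne']
      exact_mod_cast Int.floor_intCast (m + 1)
    rcases Int.even_or_odd m with hm | hm
    · have hm' : ¬ Even (m + 1) := by simpa [Int.even_add_one] using hm
      simp only [wedgeFold, hfloor, if_pos hm, if_neg hm']
      push_cast; ring
    · have hm' : Even (m + 1) := hm.add_one
      simp only [wedgeFold, hfloor, if_pos hm', if_neg (Int.not_even_iff_odd.mpr hm)]
      push_cast; ring

theorem mem_Icc_floor_div (hγ : 0 < γ) (x : ℝ) :
    x ∈ Set.Icc (⌊x / γ⌋ * γ) ((⌊x / γ⌋ + 1) * γ) := by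
  constructor
  · rw [← le_div_iff₀ hγ]; exact Int.floor_le _
  · rw [← div_le_iff₀ hγ]; exact (Int.lt_floor_add_one _).le

theorem wedgeFold_add_self (hγ : 0 < γ) (x : ℝ) : wedgeFold γ (x + γ) = γ - wedgeFold γ x := by
  set m := ⌊x / γ⌋
  have hx : x ∈ Set.Icc (m * γ) ((m + 1) * γ) := mem_Icc_floor_div hγ x
  have hxγ : x + γ ∈ Set.Icc (((m + 1 : ℤ) : ℝ) * γ) ((((m + 1 : ℤ) : ℝ) + 1) * γ) := by
    push_cast; constructor <;> linarith [hx.1, hx.2]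
  rw [wedgeFold_eq_of_mem_Icc hγ hx, wedgeFold_eq_of_mem_Icc hγ hxγ]
  rcases Int.even_or_odd m with hm | hm
  · have hm' : ¬ Even (m + 1) := by simpa [Int.even_add_one] using hm
    simp only [if_pos hm, if_neg hm']; push_cast; ring
  · simp only [if_pos hm.add_one, if_neg (Int.not_even_iff_odd.mpr hm)]; push_cast; ring

theorem wedgeFold_periodic (hγ : 0 < γ) : Function.Periodic (wedgeFold γ) (2 * γ) := fun x => by
  rw [two_mul, ← add_assoc, wedgeFold_add_self hγ, wedgeFold_add_self hγ, sub_sub_cancel]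

theorem wedgeFold_even (hγ : 0 < γ) : Function.Even (wedgeFold γ) := fun x => by
  set m := ⌊x / γ⌋
  have hx : x ∈ Set.Icc (m * γ) ((m + 1) * γ) := mem_Icc_floor_div hγ x
  have hnx : -x ∈ Set.Icc (((-m - 1 : ℤ) : ℝ) * γ) ((((-m - 1 : ℤ) : ℝ) + 1) * γ) := by
    push_cast; constructor <;> linarith [hx.1, hx.2]
  rw [wedgeFold_eq_of_mem_Icc hγ hx, wedgeFold_eq_of_mem_Icc hγ hnx]
  rcases Int.even_or_odd m with hm | hm
  · have hm' : ¬ Even (-m - 1) := by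
      rw [Int.not_even_iff_odd]; exact hm.neg.sub_odd odd_one
    simp only [if_pos hm, if_neg hm']; push_cast; ring
  · have hm' : Even (-m - 1) := hm.neg.sub_odd odd_one
    simp only [if_pos hm', if_neg (Int.not_even_iff_odd.mpr hm)]; push_cast; ring

theorem wedgeFold_injOn_Icc (hγ : 0 < γ) (m : ℤ) :
    Set.InjOn (wedgeFold γ) (Set.Icc (m * γ) ((m + 1) * γ)) := fun x hx y hy hxy => by
  rw [wedgeFold_eq_of_mem_Icc hγ hx, wedgeFold_eq_of_mem_Icc hγ hy] at hxy
  split_ifs at hxy <;> linarith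

end wedgeFold

theorem cornerBranchA_eq_wedgeFold {γ : ℝ} (hγ : 0 < γ) (α : ℝ) :
    cornerBranchA γ α = wedgeFold γ (π - α) := by
  rw [cornerBranchA, cornerBranchB_eq_wedgeFold, show γ - α + π = π - α + γ by ring,
    wedgeFold_add_self hγ, sub_sub_cancel]

theorem wedgeFold_pi_sub_eq_add_pi {γ : ℝ} (hγ : 0 < γ) {n : ℕ} (hπ : π = n * γ) (α : ℝ) :
    wedgeFold γ (π - α) = wedgeFold γ (α + π) := by
  calc wedgeFold γ (π - α) = wedgeFold γ (α - π) := by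
        rw [← neg_sub, wedgeFold_even hγ]
    _ = wedgeFold γ (α - π + n * (2 * γ)) := ((wedgeFold_periodic hγ).nat_mul n _).symm
    _ = wedgeFold γ (α + π) := by congr 1; linarith

theorem exists_pi_eq_nat_mul_of_wedgeFold_pi_sub_eq {γ : ℝ} (hγ : 0 < γ)
    (h : ∀ α ∈ Set.Ioo 0 γ, wedgeFold γ (π - α) = wedgeFold γ (α + π)) :
    ∃ n : ℕ, 0 < n ∧ π = n * γ := by
  obtain ⟨k, hlo, hhi⟩ : ∃ k : ℤ, k * γ ≤ π ∧ π < (k + 1) * γ :=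
    ⟨⌊π / γ⌋, (le_div_iff₀ hγ).1 (Int.floor_le _), (div_lt_iff₀ hγ).1 (Int.lt_floor_add_one _)⟩
  rcases hlo.eq_or_lt with hπ | hlt
  · have hk : 0 < k := by
      have : (0 : ℝ) < k := pos_of_mul_pos_left (hπ ▸ pi_pos) hγ.le
      exact_mod_cast this
    lift k to ℕ using hk.le
    exact ⟨k, by exact_mod_cast hk, hπ.symm⟩
  · set α := min (π - k * γ) ((k + 1) * γ - π)
    have hα : 0 < α := lt_min (by linarith) (by linarith)
    have hαγ : α < γ := (min_le_left _ _).trans_lt (by linarith)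
    have hα₁ : α ≤ π - k * γ := min_le_left _ _
    have hα₂ : α ≤ (k + 1) * γ - π := min_le_right _ _
    have hsame := wedgeFold_injOn_Icc hγ k ⟨by linarith, by linarith⟩ ⟨by linarith, by linarith⟩
      (h α ⟨hα, hαγ⟩)
    linarith

/-- At a corner of interior angle `γ ∈ (0, 2π)` a billiard trajectory hitting the
corner has at most `2` continuations (the two branches), and every trajectory
hitting the corner has a unique continuation (the two branches coincide for every
incoming direction) if and only if `γ = π/n` for some positive integer `n`. -/
theorem stmt_11 (γ : ℝ) (hγ : γ ∈ Set.Ioo 0 (2 * π)) :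
    (∀ α ∈ Set.Ioo 0 γ,
      ({cornerBranchA γ α, cornerBranchB γ α} : Set ℝ).ncard ≤ 2) ∧
    ((∀ α ∈ Set.Ioo 0 γ, cornerBranchA γ α = cornerBranchB γ α) ↔
      ∃ n : ℕ, 0 < n ∧ γ = π / n) := by
  have hγ0 : 0 < γ := hγ.1
  have hπ_iff (n : ℕ) (hn : 0 < n) : γ = π / n ↔ π = n * γ := by
    rw [eq_div_iff (by positivity), mul_comm, eq_comm]
  simp only [cornerBranchA_eq_wedgeFold hγ0, cornerBranchB_eq_wedgeFold]
  refine ⟨fun α _ => (Set.ncard_insert_le _ _).trans (by simp), fun h => ?_, ?_⟩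
  · obtain ⟨n, hn, hπ⟩ := exists_pi_eq_nat_mul_of_wedgeFold_pi_sub_eq hγ0 h
    exact ⟨n, hn, (hπ_iff n hn).2 hπ⟩
  · rintro ⟨n, hn, hγn⟩ α -
    exact wedgeFold_pi_sub_eq_add_pi hγ0 ((hπ_iff n hn).1 hγn) α
end

section
/- For a dispersing billiard with differential DF as above, any unstable tangent vector v at z = (r,φ) satisfies |DF v| ≥ (C/cos φ')·|v| where φ' is the angle coordinate of F z and C > 0 depends only on the lower bounds for the curvature κ_min > 0 and upper/lower bounds for the free path. -/
/-!
Only the first row of `DF` is needed: for an unstable vector `δr·δφ ≥ 0` the two terms of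
`(τκ + cos φ) δr + τ δφ` have the same sign, so the cross term of its square is nonnegative
and both coefficients are at least `min (τmin κmin) τmin`.
-/

open Matrix

theorem mul_sqrt_sq_add_sq_le_abs_add {a b c x y : ℝ} (hc : 0 ≤ c) (ha : c ≤ a) (hb : c ≤ b)
    (hxy : 0 ≤ x * y) : c * √(x ^ 2 + y ^ 2) ≤ |a * x + b * y| := by
  rw [← Real.sqrt_sq hc, ← Real.sqrt_mul (sq_nonneg c), ← Real.sqrt_sq_eq_abs]
  apply Real.sqrt_le_sqrt
  have hab : 0 ≤ a * b := mul_nonneg (hc.trans ha) (hc.trans hb)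
  nlinarith [mul_nonneg hab hxy, mul_le_mul ha ha hc (hc.trans ha),
    mul_le_mul hb hb hc (hc.trans hb), sq_nonneg x, sq_nonneg y]

theorem abs_le_sqrt_sq_add_sq (u w : ℝ) : |u| ≤ √(u ^ 2 + w ^ 2) :=
  Real.abs_le_sqrt (le_add_of_nonneg_right (sq_nonneg w))

theorem smul_of_mulVec_apply_zero (s a b c d : ℝ) (v : Fin 2 → ℝ) :
    (s • !![a, b; c, d]).mulVec v 0 = s * (a * v 0 + b * v 1) := by
  simp only [mulVec, dotProduct, Matrix.smul_apply, of_apply, cons_val', cons_val_fin_one,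
    cons_val_zero, cons_val_one, smul_eq_mul, Fin.sum_univ_two]
  ring

theorem stmt_13_general (κmin τmin τmax : ℝ)
    (hκmin : 0 < κmin) (hτmin : 0 < τmin) :
    ∃ C : ℝ, 0 < C ∧
      ∀ τ κ κ' φ φ' : ℝ,
        τmin ≤ τ → τ ≤ τmax → κmin ≤ κ → κmin ≤ κ' →
        0 ≤ Real.cos φ → 0 < Real.cos φ' →
        ∀ DF : Matrix (Fin 2) (Fin 2) ℝ,
          DF = -(1 / Real.cos φ') •
            !![τ * κ + Real.cos φ, τ;
               τ * κ * κ' + κ' * Real.cos φ + κ * Real.cos φ',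
               τ * κ' + Real.cos φ'] →
          ∀ v : Fin 2 → ℝ, 0 ≤ v 0 * v 1 →
            Real.sqrt ((DF.mulVec v 0) ^ 2 + (DF.mulVec v 1) ^ 2) ≥
              (C / Real.cos φ') * Real.sqrt ((v 0) ^ 2 + (v 1) ^ 2) := by
  refine ⟨min (τmin * κmin) τmin, by positivity, ?_⟩
  intro τ κ κ' φ φ' hτ _ hκ _ hφ hφ' DF hDF v hv
  set C := min (τmin * κmin) τmin
  have hC : 0 ≤ C := by positivity
  have hCa : C ≤ τ * κ + Real.cos φ :=
    (min_le_left _ _).trans (by nlinarith [mul_le_mul hτ hκ hκmin.le (hτmin.trans_le hτ).le])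
  have hCb : C ≤ τ := (min_le_right _ _).trans hτ
  calc C / Real.cos φ' * √(v 0 ^ 2 + v 1 ^ 2)
      = |-(1 / Real.cos φ')| * (C * √(v 0 ^ 2 + v 1 ^ 2)) := by
        rw [abs_neg, abs_of_pos (by positivity)]; ring
    _ ≤ |-(1 / Real.cos φ')| * |(τ * κ + Real.cos φ) * v 0 + τ * v 1| := by
        gcongr; exact mul_sqrt_sq_add_sq_le_abs_add hC hCa hCb hv
    _ = |DF.mulVec v 0| := by rw [hDF, smul_of_mulVec_apply_zero, abs_mul]
    _ ≤ √(DF.mulVec v 0 ^ 2 + DF.mulVec v 1 ^ 2) := abs_le_sqrt_sq_add_sq _ _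

/-- Expansion of unstable vectors: there is a constant `C > 0`, depending only on
the curvature lower bound `κmin` and the bounds `τmin ≤ τ ≤ τmax` on the free
path, such that every unstable vector `v` (i.e. `δr·δφ ≥ 0`) satisfies
`|DF v| ≥ (C / cos φ')·|v|`, where `DF` is the standard billiard differential. -/
theorem stmt_13 (κmin τmin τmax : ℝ)
    (hκmin : 0 < κmin) (hτmin : 0 < τmin) (hττ : τmin ≤ τmax) :
    ∃ C : ℝ, 0 < C ∧
      ∀ τ κ κ' φ φ' : ℝ,
        τmin ≤ τ → τ ≤ τmax → κmin ≤ κ → κmin ≤ κ' →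
        0 ≤ Real.cos φ → 0 < Real.cos φ' →
        ∀ DF : Matrix (Fin 2) (Fin 2) ℝ,
          DF = -(1 / Real.cos φ') •
            !![τ * κ + Real.cos φ, τ;
               τ * κ * κ' + κ' * Real.cos φ + κ * Real.cos φ',
               τ * κ' + Real.cos φ'] →
          ∀ v : Fin 2 → ℝ, 0 ≤ v 0 * v 1 →
            Real.sqrt ((DF.mulVec v 0) ^ 2 + (DF.mulVec v 1) ^ 2) ≥
              (C / Real.cos φ') * Real.sqrt ((v 0) ^ 2 + (v 1) ^ 2) :=
  stmt_13_general κmin τmin τmax hκmin hτmin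
end
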